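/- Suppose c : [ω₁]² → 2 realizes all patterns, and let τ[X] denote the associated topology on each X ⊆ ω₁. Then for every X ⊆ ω₁, the space (X, τ[X]) is hereditarily Lindelöf. -/
import Mathlib
open Set


/-- The first uncountable ordinal. -/
noncomputable def omega1 : Ordinal := (Cardinal.aleph 1).ord

lemma countable_Iio_lt {σ : Ordinal} (h : σ < omega1) : (Set.Iio σ).Countable := by
  rw [Cardinal.countable_iff_lt_aleph_one, Ordinal.mk_Iio_ordinal]
  have h1 : σ.card < Cardinal.aleph 1 := Cardinal.lt_ord.mp h
  refine lt_of_lt_of_le (Cardinal.lift_lt.mpr h1) ?_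
  rw [Cardinal.lift_aleph, Ordinal.lift_one]

lemma countable_Iic_lt {σ : Ordinal} (h : σ < omega1) : (Set.Iic σ).Countable := by
  have h1 : σ + 1 < omega1 := by
    rw [Ordinal.add_one_eq_succ]
    exact (Cardinal.isSuccLimit_ord (Cardinal.aleph0_le_aleph 1)).succ_lt h
  have h3 : σ < σ + 1 := by
    rw [Ordinal.add_one_eq_succ]; exact Order.lt_succ σ
  exact (countable_Iio_lt h1).mono (fun x hx => lt_of_le_of_lt hx h3)

lemma not_countable_Iio_omega1 : ¬ (Set.Iio omega1).Countable := by
  rw [Cardinal.countable_iff_lt_aleph_one, Ordinal.mk_Iio_ordinal]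
  simp only [omega1, Cardinal.card_ord]
  rw [Cardinal.lift_aleph, Ordinal.lift_one]
  exact lt_irrefl _

lemma pigeonhole {S : Set Ordinal} (hS : ¬ S.Countable) {κ : Type*} [Countable κ]
    (f : Ordinal → κ) : ∃ v, ¬ {α ∈ S | f α = v}.Countable := by
  by_contra h
  push_neg at h
  apply hS
  have : S ⊆ ⋃ v : κ, {α ∈ S | f α = v} := fun α hα => mem_iUnion.mpr ⟨f α, hα, rfl⟩
  exact (countable_iUnion h).mono this

lemma exists_gt_of_countable {s : Set Ordinal} (hs : s.Countable)
    (h : ∀ x ∈ s, x < omega1) : ∃ ζ, ζ < omega1 ∧ ∀ x ∈ s, x < ζ := by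
  have hcov : ¬ (Set.Iio omega1 ⊆ ⋃ x ∈ s, Set.Iic x) := by
    intro hsub
    exact not_countable_Iio_omega1
      ((hs.biUnion (fun x hx => countable_Iic_lt (h x hx))).mono hsub)
  rw [not_subset] at hcov
  obtain ⟨ζ, hζ, hζ2⟩ := hcov
  refine ⟨ζ, hζ, fun x hx => ?_⟩
  by_contra hle
  exact hζ2 (mem_biUnion hx (not_lt.mp hle))

lemma deltaSystemAux : ∀ (n : ℕ) (S : Set Ordinal) (F : Ordinal → Finset Ordinal),
    ¬ S.Countable → (∀ α ∈ S, (F α).card = n) →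
    ∃ S' R, S' ⊆ S ∧ ¬ S'.Countable ∧
      ∀ β ∈ S', ∀ γ ∈ S', β ≠ γ → F β ∩ F γ = R := by
  intro n
  induction n with
  | zero =>
    intro S F hS hcard
    refine ⟨S, ∅, subset_rfl, hS, fun β hβ γ hγ _ => ?_⟩
    have h1 := Finset.card_eq_zero.mp (hcard β hβ)
    simp [h1]
  | succ n IH =>
    intro S F hS hcard
    by_cases hx : ∃ x, ¬ {α ∈ S | x ∈ F α}.Countable
    · obtain ⟨x, hx⟩ := hx
      obtain ⟨S', R, hsub, hS', hR⟩ := IH {α ∈ S | x ∈ F α} (fun α => (F α).erase x) hx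
        (fun α hα => by
          rw [Finset.card_erase_of_mem hα.2, hcard α hα.1]; rfl)
      refine ⟨S', insert x R, fun a ha => (hsub ha).1, hS', ?_⟩
      intro β hβ γ hγ hne
      have hxβ : x ∈ F β := (hsub hβ).2
      have hxγ : x ∈ F γ := (hsub hγ).2
      have key := hR β hβ γ hγ hne
      ext z
      simp only [Finset.mem_inter, Finset.mem_insert]
      constructor
      · rintro ⟨h1, h2⟩
        by_cases hz : z = x
        · exact Or.inl hz
        · right
          rw [← key]
          simp only [Finset.mem_inter, Finset.mem_erase]
          exact ⟨⟨hz, h1⟩, ⟨hz, h2⟩⟩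
      · rintro (rfl | hz)
        · exact ⟨hxβ, hxγ⟩
        · rw [← key] at hz
          simp only [Finset.mem_inter, Finset.mem_erase] at hz
          exact ⟨hz.1.2, hz.2.2⟩
    · push_neg at hx
      obtain ⟨T, hTmax⟩ := zorn_subset
        {T : Set Ordinal | T ⊆ S ∧ ∀ β ∈ T, ∀ γ ∈ T, β ≠ γ → F β ∩ F γ = ∅}
        (by
          intro ch hch hchain
          refine ⟨⋃₀ ch, ⟨?_, ?_⟩, fun s hs => subset_sUnion_of_mem hs⟩
          · exact sUnion_subset (fun T hT => (hch hT).1)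
          · intro β hβ γ hγ hne
            obtain ⟨T1, hT1, hβ1⟩ := hβ
            obtain ⟨T2, hT2, hγ1⟩ := hγ
            rcases hchain.total hT1 hT2 with h | h
            · exact (hch hT2).2 β (h hβ1) γ hγ1 hne
            · exact (hch hT1).2 β hβ1 γ (h hγ1) hne)
      refine ⟨T, ∅, hTmax.prop.1, ?_, hTmax.prop.2⟩
      intro hTc
      apply hS
      have hcov : S ⊆ T ∪ ⋃ β ∈ T, ⋃ x ∈ (F β : Set Ordinal), {α ∈ S | x ∈ F α} := by
        intro α hα
        by_cases hαT : α ∈ T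
        · exact Or.inl hαT
        right
        by_contra hno
        simp only [mem_iUnion, mem_setOf_eq, not_exists, not_and] at hno
        have hins : insert α T ∈ {T : Set Ordinal | T ⊆ S ∧
            ∀ β ∈ T, ∀ γ ∈ T, β ≠ γ → F β ∩ F γ = ∅} := by
          constructor
          · exact insert_subset hα hTmax.prop.1
          · intro β hβ γ hγ hne
            have hdisj : ∀ δ ∈ T, F α ∩ F δ = ∅ := by
              intro δ hδ
              rw [Finset.eq_empty_iff_forall_notMem]
              intro z hz
              rw [Finset.mem_inter] at hz
              exact hno δ hδ z hz.2 hα hz.1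
            rcases hβ with rfl | hβ
            · rcases hγ with rfl | hγ
              · exact absurd rfl hne
              · exact hdisj γ hγ
            · rcases hγ with rfl | hγ
              · rw [Finset.inter_comm]; exact hdisj β hβ
              · exact hTmax.prop.2 β hβ γ hγ hne
        have := hTmax.2 hins (subset_insert α T) (mem_insert α T)
        exact hαT this
      refine Set.Countable.mono hcov (Set.Countable.union hTc ?_)
      exact hTc.biUnion (fun β _ => (F β).countable_toSet.biUnion (fun x _ => hx x))

lemma deltaSystem {S : Set Ordinal} (hS : ¬ S.Countable) (F : Ordinal → Finset Ordinal) :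
    ∃ S' R, S' ⊆ S ∧ ¬ S'.Countable ∧
      ∀ β ∈ S', ∀ γ ∈ S', β ≠ γ → F β ∩ F γ = R := by
  obtain ⟨n, hn⟩ := pigeonhole hS (fun α => (F α).card)
  obtain ⟨S', R, hsub, hS', hR⟩ := deltaSystemAux n {α ∈ S | (F α).card = n}
    (fun α => F α) hn (fun α hα => hα.2)
  exact ⟨S', R, fun a ha => (hsub ha).1, hS', hR⟩

lemma chainLemma {S : Set Ordinal} (hS : ¬ S.Countable) (hSb : S ⊆ Set.Iio omega1)
    (s : Ordinal → Finset Ordinal) (hsb : ∀ β ∈ S, ∀ x ∈ s β, x < omega1)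
    (hcnt : ∀ σ, σ < omega1 → {β ∈ S | ∃ x ∈ s β, x ≤ σ}.Countable) :
    ∃ T, T ⊆ S ∧ ¬ T.Countable ∧
      ∀ β ∈ T, ∀ γ ∈ T, β < γ → ∀ x ∈ s β, ∀ z ∈ s γ, x < z := by
  obtain ⟨T, hTmax⟩ := zorn_subset
    {T : Set Ordinal | T ⊆ S ∧ ∀ β ∈ T, ∀ γ ∈ T, β < γ → ∀ x ∈ s β, ∀ z ∈ s γ, x < z}
    (by
      intro ch hch hchain
      refine ⟨⋃₀ ch, ⟨sUnion_subset (fun T hT => (hch hT).1), ?_⟩,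
        fun t ht => subset_sUnion_of_mem ht⟩
      intro β hβ γ hγ hlt
      obtain ⟨T1, hT1, hβ1⟩ := hβ
      obtain ⟨T2, hT2, hγ1⟩ := hγ
      rcases hchain.total hT1 hT2 with h | h
      · exact (hch hT2).2 β (h hβ1) γ hγ1 hlt
      · exact (hch hT1).2 β hβ1 γ (h hγ1) hlt)
  refine ⟨T, hTmax.prop.1, ?_, hTmax.prop.2⟩
  intro hTc
  -- bound on indices
  obtain ⟨ζ1, hζ1, hζ1b⟩ := exists_gt_of_countable hTc (fun x hx => hSb (hTmax.prop.1 hx))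
  -- bound on elements
  have hEc : (⋃ β ∈ T, (s β : Set Ordinal)).Countable :=
    hTc.biUnion (fun β _ => (s β).countable_toSet)
  obtain ⟨ζ2, hζ2, hζ2b⟩ := exists_gt_of_countable hEc
    (by
      intro x hx
      simp only [mem_iUnion] at hx
      obtain ⟨β, hβ, hxβ⟩ := hx
      exact hsb β (hTmax.prop.1 hβ) x hxβ)
  -- find a new element
  have hbad : ({β ∈ S | β ≤ ζ1} ∪ {β ∈ S | ∃ x ∈ s β, x ≤ ζ2}).Countable :=
    Set.Countable.union ((countable_Iic_lt hζ1).mono (fun β hβ => hβ.2)) (hcnt ζ2 hζ2)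
  have hnsub : ¬ (S ⊆ {β ∈ S | β ≤ ζ1} ∪ {β ∈ S | ∃ x ∈ s β, x ≤ ζ2}) :=
    fun h => hS (hbad.mono h)
  rw [not_subset] at hnsub
  obtain ⟨δ, hδS, hδbad⟩ := hnsub
  simp only [mem_union, mem_setOf_eq, not_or, not_and, not_exists, not_le] at hδbad
  have hδ1 : ζ1 < δ := hδbad.1 hδS
  have hδ2 : ∀ z ∈ s δ, ζ2 < z := hδbad.2 hδS
  have hδT : δ ∉ T := fun h => absurd (hζ1b δ h) (not_lt.mpr hδ1.le)
  have hins : insert δ T ∈ {T : Set Ordinal | T ⊆ S ∧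
      ∀ β ∈ T, ∀ γ ∈ T, β < γ → ∀ x ∈ s β, ∀ z ∈ s γ, x < z} := by
    constructor
    · exact insert_subset hδS hTmax.prop.1
    · intro β hβ γ hγ hlt x hx z hz
      rcases hβ with rfl | hβ
      · rcases hγ with rfl | hγ
        · exact absurd hlt (lt_irrefl _)
        · exact absurd (lt_trans (hζ1b γ hγ) hδ1) (not_lt.mpr hlt.le)
      · rcases hγ with rfl | hγ
        · exact lt_trans (hζ2b x (mem_biUnion hβ hx)) (hδ2 z hz)
        · exact hTmax.prop.2 β hβ γ hγ hlt x hx z hz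
  exact hδT (hTmax.2 hins (subset_insert δ T) (mem_insert δ T))


/-- The coloring `c : [ω₁]² → 2` realizes all patterns. -/
def RealizesAllPatterns (c : Ordinal → Ordinal → Fin 2) : Prop :=
  ∀ (k l : ℕ), 0 < k → 0 < l →
    ∀ (A : Set (Fin k → Ordinal)) (B : Set (Fin l → Ordinal)),
      (∀ a ∈ A, StrictMono a ∧ ∀ i, a i < omega1) →
      (∀ b ∈ B, StrictMono b ∧ ∀ j, b j < omega1) →
      (∀ a ∈ A, ∀ a' ∈ A, a ≠ a' → ∀ i i', a i ≠ a' i') →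
      (∀ b ∈ B, ∀ b' ∈ B, b ≠ b' → ∀ j j', b j ≠ b' j') →
      ¬ A.Countable → ¬ B.Countable →
      ∀ (χ : Fin k → Fin 2) (π : Fin k → Fin l),
        ∃ a ∈ A, ∃ b ∈ B, (∀ (i : Fin k) (j : Fin l), a i < b j) ∧
          ∀ i : Fin k, c (a i) (b (π i)) = χ i

/-- `W_α = {α} ∪ {β < ω₁ : α < β and c(α,β) = 1}`. -/
noncomputable def Wset (c : Ordinal → Ordinal → Fin 2) (α : Ordinal) : Set Ordinal :=
  {α} ∪ {β | β < omega1 ∧ α < β ∧ c α β = 1}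

lemma mem_Wset_of_lt {c : Ordinal → Ordinal → Fin 2} {ξ z : Ordinal}
    (h1 : ξ < z) (h2 : z < omega1) : z ∈ Wset c ξ ↔ c ξ z = 1 := by
  simp only [Wset, mem_union, mem_singleton_iff, mem_setOf_eq]
  constructor
  · rintro (rfl | ⟨_, _, h⟩)
    · exact absurd h1 (lt_irrefl _)
    · exact h
  · intro h
    exact Or.inr ⟨h2, h1, h⟩

lemma core (c : Ordinal → Ordinal → Fin 2) (hc : RealizesAllPatterns c)
    (X : Set Ordinal) (hX : X ⊆ Set.Iio omega1)
    (y : Ordinal → Ordinal) (F : Ordinal → Finset Ordinal)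
    (hy : ∀ α < omega1, y α ∈ X)
    (hyI : ∀ α < omega1, ∀ β < omega1, α ≠ β → y α ≠ y β)
    (hF : ∀ α < omega1, (F α : Set Ordinal) ⊆ X) :
    ∃ β γ, β < γ ∧ γ < omega1 ∧
      ∀ ξ ∈ F β, (y γ ∈ Wset c ξ ↔ y β ∈ Wset c ξ) := by
  classical
  obtain ⟨S1, R, hS1sub, hS1, hR⟩ := deltaSystem not_countable_Iio_omega1 F
  have hS1lt : ∀ α ∈ S1, α < omega1 := fun α hα => hS1sub hα
  -- remove indices whose point lies in the root
  have hS2 : ¬ {α ∈ S1 | y α ∉ (R : Set Ordinal)}.Countable := by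
    intro h
    apply hS1
    have hc2 : {α ∈ S1 | y α ∈ (R : Set Ordinal)}.Countable := by
      refine Set.MapsTo.countable_of_injOn (t := (R : Set Ordinal))
        (fun α hα => hα.2) ?_ R.countable_toSet
      intro α hα β hβ hEq
      by_contra hne
      exact hyI α (hS1lt α hα.1) β (hS1lt β hβ.1) hne hEq
    have hsub : S1 ⊆ {α ∈ S1 | y α ∉ (R : Set Ordinal)} ∪ {α ∈ S1 | y α ∈ (R : Set Ordinal)} := by
      intro α hα
      by_cases hmem : y α ∈ (R : Set Ordinal)
      · exact Or.inr ⟨hα, hmem⟩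
      · exact Or.inl ⟨hα, hmem⟩
    exact (h.union hc2).mono hsub
  set S2 := {α ∈ S1 | y α ∉ (R : Set Ordinal)} with hS2def
  set sF : Ordinal → Finset Ordinal := fun α => insert (y α) (F α \ R) with hsFdef
  have hysF : ∀ α, y α ∈ sF α := fun α => Finset.mem_insert_self _ _
  have hsFX : ∀ α, α < omega1 → (sF α : Set Ordinal) ⊆ X := by
    intro α hα x hx
    simp only [hsFdef, Finset.coe_insert, Set.mem_insert_iff, Finset.coe_sdiff,
      Set.mem_diff, Finset.mem_coe] at hx
    rcases hx with rfl | ⟨hx1, _⟩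
    · exact hy α hα
    · exact hF α hα hx1
  -- stabilize cardinality
  obtain ⟨k, hk⟩ := pigeonhole hS2 (fun α => (sF α).card)
  set S3 := {α ∈ S2 | (sF α).card = k} with hS3def
  have hS3lt : ∀ α ∈ S3, α < omega1 := fun α hα => hS1lt α hα.1.1
  have hS3ne : S3.Nonempty := by
    rw [nonempty_iff_ne_empty]
    intro h
    exact hk (h ▸ countable_empty)
  have hk0 : 0 < k := by
    obtain ⟨α, hα⟩ := hS3ne
    rw [← hα.2]
    exact Finset.card_pos.mpr ⟨y α, hysF α⟩
  -- stabilize the fine data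
  set data : Ordinal → ((Fin k → Bool × Bool) × Fin k × ({x // x ∈ R} → Bool)) :=
    fun α =>
      if h : (sF α).card = k then
        (fun i => (decide ((sF α).orderEmbOfFin h i ∈ F α),
                   decide (y α ∈ Wset c ((sF α).orderEmbOfFin h i))),
         ((sF α).orderIsoOfFin h).symm ⟨y α, hysF α⟩,
         fun ξ => decide (y α ∈ Wset c ξ.val))
      else (fun _ => (false, false), ⟨0, hk0⟩, fun _ => false) with hdatadef
  obtain ⟨d, hd⟩ := pigeonhole hk data
  set S4 := {α ∈ S3 | data α = d} with hS4def
  have hS4card : ∀ α ∈ S4, (sF α).card = k := fun α hα => hα.1.2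
  have hS4lt : ∀ α ∈ S4, α < omega1 := fun α hα => hS3lt α hα.1
  have hS4S1 : ∀ α ∈ S4, α ∈ S1 := fun α hα => hα.1.1.1
  -- apply the chain lemma
  obtain ⟨T, hTsub, hT, hTsep⟩ := chainLemma hd (fun α hα => hS4lt α hα) sF
    (fun β hβ x hx => hX (hsFX β (hS4lt β hβ) hx))
    (by
      intro σ hσ
      have hA1 : {β ∈ S4 | y β ≤ σ}.Countable := by
        refine Set.MapsTo.countable_of_injOn (t := Set.Iic σ)
          (fun β hβ => hβ.2) ?_ (countable_Iic_lt hσ)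
        intro α hα β hβ hEq
        by_contra hne
        exact hyI α (hS4lt α hα.1) β (hS4lt β hβ.1) hne hEq
      have hA2 : {β ∈ S4 | ∃ x, x ∈ F β \ R ∧ x ≤ σ}.Countable := by
        set g : Ordinal → Ordinal :=
          fun β => if h : ∃ x, x ∈ F β \ R ∧ x ≤ σ then h.choose else 0 with hgdef
        refine Set.MapsTo.countable_of_injOn (t := Set.Iic σ) (f := g) ?_ ?_
          (countable_Iic_lt hσ)
        · intro β hβ
          simp only [hgdef, dif_pos hβ.2]
          exact hβ.2.choose_spec.2
        · intro α hα β hβ hEq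
          by_contra hne
          have hxα := hα.2.choose_spec.1
          have hxβ := hβ.2.choose_spec.1
          rw [hgdef] at hEq
          simp only [dif_pos hα.2, dif_pos hβ.2] at hEq
          rw [hEq] at hxα
          rw [Finset.mem_sdiff] at hxα hxβ
          have : hβ.2.choose ∈ F α ∩ F β := Finset.mem_inter.mpr ⟨hxα.1, hxβ.1⟩
          rw [hR α (hS4S1 α hα.1) β (hS4S1 β hβ.1) hne] at this
          exact hxβ.2 this
      refine ((hA1.union hA2).mono ?_)
      intro β hβ
      obtain ⟨hβ4, x, hx, hxσ⟩ := hβ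
      simp only [hsFdef, Finset.mem_insert] at hx
      rcases hx with rfl | hx
      · exact Or.inl ⟨hβ4, hxσ⟩
      · exact Or.inr ⟨hβ4, x, hx, hxσ⟩)
  -- the family of tuples
  set fn : Ordinal → (Fin k → Ordinal) :=
    fun β => if h : (sF β).card = k then (fun i => (sF β).orderEmbOfFin h i)
      else fun _ => 0 with hfndef
  have hfneq : ∀ β (h : (sF β).card = k), fn β = fun i => (sF β).orderEmbOfFin h i :=
    fun β h => dif_pos h
  have hfn_mem : ∀ β (h : (sF β).card = k) (i : Fin k), fn β i ∈ sF β := by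
    intro β h i
    rw [hfneq β h]
    exact Finset.orderEmbOfFin_mem (sF β) h i
  have hsep' : ∀ β ∈ T, ∀ γ ∈ T, β < γ → ∀ i j, fn β i < fn γ j := by
    intro β hβ γ hγ hlt i j
    exact hTsep β hβ γ hγ hlt _ (hfn_mem β (hS4card β (hTsub hβ)) i)
      _ (hfn_mem γ (hS4card γ (hTsub hγ)) j)
  have hy_eq : ∀ γ, γ ∈ T → fn γ d.2.1 = y γ := by
    intro γ hγ
    have hcard := hS4card γ (hTsub hγ)
    have hdγ : data γ = d := (hTsub hγ).2
    have hj0 : d.2.1 = ((sF γ).orderIsoOfFin hcard).symm ⟨y γ, hysF γ⟩ := by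
      rw [← hdγ]
      simp only [hdatadef, dif_pos hcard]
    rw [hfneq γ hcard, hj0]
    show ((sF γ).orderEmbOfFin hcard) (((sF γ).orderIsoOfFin hcard).symm ⟨y γ, hysF γ⟩) = y γ
    rw [← Finset.coe_orderIsoOfFin_apply (sF γ) hcard, OrderIso.apply_symm_apply]
  set A : Set (Fin k → Ordinal) := fn '' T with hAdef
  have hgoodA : ∀ a ∈ A, StrictMono a ∧ ∀ i, a i < omega1 := by
    rintro a ⟨β, hβ, rfl⟩
    have hcard := hS4card β (hTsub hβ)
    constructor
    · rw [hfneq β hcard]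
      exact ((sF β).orderEmbOfFin hcard).strictMono
    · intro i
      exact hX (hsFX β (hS4lt β (hTsub hβ)) (hfn_mem β hcard i))
  have hdisjA : ∀ a ∈ A, ∀ a' ∈ A, a ≠ a' → ∀ i i', a i ≠ a' i' := by
    rintro a ⟨β, hβ, rfl⟩ a' ⟨γ, hγ, rfl⟩ hne i i'
    rcases lt_trichotomy β γ with hlt | rfl | hlt
    · exact ne_of_lt (hsep' β hβ γ hγ hlt i i')
    · exact absurd rfl hne
    · exact ne_of_gt (hsep' γ hγ β hβ hlt i' i)
  have hAc : ¬ A.Countable := by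
    intro h
    apply hT
    refine countable_of_injective_of_countable_image ?_ h
    intro β hβ γ hγ hEq
    by_contra hne
    rcases lt_trichotomy β γ with hlt | rfl | hlt
    · have := hsep' β hβ γ hγ hlt ⟨0, hk0⟩ ⟨0, hk0⟩
      rw [hEq] at this
      exact lt_irrefl _ this
    · exact hne rfl
    · have := hsep' γ hγ β hβ hlt ⟨0, hk0⟩ ⟨0, hk0⟩
      rw [hEq] at this
      exact lt_irrefl _ this
  set χfin : Fin k → Fin 2 :=
    fun i => if (d.1 i).1 = true then (if (d.1 i).2 = true then 1 else 0) else 0 with hχdef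
  obtain ⟨a, haA, b, hbA, hab, hpat⟩ :=
    hc k k hk0 hk0 A A hgoodA hgoodA hdisjA hdisjA hAc hAc χfin (fun _ => d.2.1)
  obtain ⟨β, hβT, rfl⟩ := haA
  obtain ⟨γ, hγT, rfl⟩ := hbA
  have hcardβ := hS4card β (hTsub hβT)
  have hcardγ := hS4card γ (hTsub hγT)
  have i0 : Fin k := ⟨0, hk0⟩
  have hlt : β < γ := by
    rcases lt_trichotomy β γ with hlt | rfl | hlt
    · exact hlt
    · exact absurd (hab ⟨0, hk0⟩ ⟨0, hk0⟩) (lt_irrefl _)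
    · exact absurd (hab ⟨0, hk0⟩ ⟨0, hk0⟩)
        (not_lt.mpr (le_of_lt (hsep' γ hγT β hβT hlt ⟨0, hk0⟩ ⟨0, hk0⟩)))
  have hγω : γ < omega1 := hS4lt γ (hTsub hγT)
  have hyγω : y γ < omega1 := hX (hy γ hγω)
  refine ⟨β, γ, hlt, hγω, ?_⟩
  intro ξ hξ
  have hdβ : data β = d := (hTsub hβT).2
  have hdγ : data γ = d := (hTsub hγT).2
  by_cases hξR : ξ ∈ R
  · have h1 : d.2.2 ⟨ξ, hξR⟩ = decide (y β ∈ Wset c ξ) := by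
      rw [← hdβ]
      simp only [hdatadef, dif_pos hcardβ]
    have h2 : d.2.2 ⟨ξ, hξR⟩ = decide (y γ ∈ Wset c ξ) := by
      rw [← hdγ]
      simp only [hdatadef, dif_pos hcardγ]
    have h3 : decide (y γ ∈ Wset c ξ) = decide (y β ∈ Wset c ξ) := by rw [← h1, ← h2]
    exact decide_eq_decide.mp h3
  · have hξsF : ξ ∈ sF β := Finset.mem_insert_of_mem (Finset.mem_sdiff.mpr ⟨hξ, hξR⟩)
    set i : Fin k := ((sF β).orderIsoOfFin hcardβ).symm ⟨ξ, hξsF⟩ with hidef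
    have hai : (sF β).orderEmbOfFin hcardβ i = ξ := by
      rw [← Finset.coe_orderIsoOfFin_apply (sF β) hcardβ, hidef, OrderIso.apply_symm_apply]
    have hfnβi : fn β i = ξ := by rw [hfneq β hcardβ]; exact hai
    have hd1 : d.1 i = (decide ((sF β).orderEmbOfFin hcardβ i ∈ F β),
        decide (y β ∈ Wset c ((sF β).orderEmbOfFin hcardβ i))) := by
      rw [← hdβ]
      simp only [hdatadef, dif_pos hcardβ]
    rw [hai] at hd1
    have hd11 : (d.1 i).1 = true := by rw [hd1]; simp [hξ]
    have hpati : c (fn β i) (fn γ (d.2.1)) = χfin i := hpat i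
    rw [hfnβi, hy_eq γ hγT] at hpati
    have hξlt : ξ < y γ := by
      have := hab i d.2.1
      rw [hfnβi, hy_eq γ hγT] at this
      exact this
    rw [mem_Wset_of_lt hξlt hyγω]
    by_cases hyβ : y β ∈ Wset c ξ
    · have hχ1 : χfin i = 1 := by
        simp only [hχdef, hd1]
        simp [hξ, hyβ]
      rw [hχ1] at hpati
      exact iff_of_true hpati hyβ
    · have hχ0 : χfin i = 0 := by
        simp only [hχdef, hd1]
        simp [hξ, hyβ]
      rw [hχ0] at hpati
      refine iff_of_false ?_ hyβ
      rw [hpati]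
      decide


/-- The topology `τ[X]` on `X ⊆ ω₁`: generated by the subbasis consisting of the
sets `W_ξ ∩ X` and `X \ W_ξ` for `ξ ∈ X` (each `W_ξ ∩ X` is declared clopen). -/
noncomputable def tauTop (c : Ordinal → Ordinal → Fin 2) (X : Set Ordinal) :
    TopologicalSpace X :=
  TopologicalSpace.generateFrom
    ({s | ∃ ξ ∈ X, s = {x : X | x.val ∈ Wset c ξ}} ∪
     {s | ∃ ξ ∈ X, s = {x : X | x.val ∉ Wset c ξ}})

/-- **Corollary (Moore).** If `c` realizes all patterns, then for every `X ⊆ ω₁`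
the space `(X, τ[X])` is hereditarily Lindelöf. -/
theorem statement18 (c : Ordinal → Ordinal → Fin 2) (hc : RealizesAllPatterns c)
    (X : Set Ordinal) (hX : X ⊆ Set.Iio omega1) :
    @HereditarilyLindelofSpace X (tauTop c X) := by
  classical
  letI : TopologicalSpace X := tauTop c X
  constructor
  intro t _
  rw [isLindelof_iff_countable_subcover]
  intro ι U hUo hcov
  by_contra hnc
  push_neg at hnc
  have h0 := hnc ∅ countable_empty
  rw [not_subset] at h0
  obtain ⟨x0, hx0t, -⟩ := h0
  obtain ⟨i0, hi0⟩ : ∃ i, x0 ∈ U i := by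
    have := hcov hx0t
    simpa using this
  set SB : Set (Set X) := {s | ∃ ξ ∈ X, s = {x : X | x.val ∈ Wset c ξ}} ∪
     {s | ∃ ξ ∈ X, s = {x : X | x.val ∉ Wset c ξ}} with hSBdef
  have hbasis : TopologicalSpace.IsTopologicalBasis
      ((fun f : Set (Set X) => ⋂₀ f) '' { f : Set (Set X) | f.Finite ∧ f ⊆ SB }) :=
    TopologicalSpace.isTopologicalBasis_of_subbasis rfl
  -- the key existence statement for the recursion
  have hex : ∀ (α : Ordinal.{0}), α < omega1 → ∀ (v : ∀ β : Ordinal.{0}, β < α → (X × ι)),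
      ∃ p : X × ι, p.1 ∈ t ∧ p.1 ∈ U p.2 ∧ ∀ β (hβ : β < α), p.1 ∉ U (v β hβ).2 := by
    intro α hα v
    set r : Set ι := (fun β => if h : β < α then (v β h).2 else i0) '' Set.Iio α with hrdef
    have hrc : r.Countable := (countable_Iio_lt hα).image _
    have h1 := hnc r hrc
    rw [not_subset] at h1
    obtain ⟨yα, hyt, hyn⟩ := h1
    obtain ⟨iα, hiα⟩ : ∃ i, yα ∈ U i := by
      have := hcov hyt
      simpa using this
    refine ⟨(yα, iα), hyt, hiα, ?_⟩
    intro β hβ hmem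
    apply hyn
    refine Set.mem_biUnion ?_ hmem
    refine ⟨β, hβ, ?_⟩
    simp only [dif_pos hβ]
  -- transfinite recursion
  set g : Ordinal.{0} → X × ι := WellFounded.fix Ordinal.lt_wf
    (fun α rec => if h : α < omega1 then (hex α h (fun β hβ => rec β hβ)).choose
      else (x0, i0)) with hgdef
  have hgeq : ∀ α, g α = if h : α < omega1 then
      (hex α h (fun β _ => g β)).choose else (x0, i0) := by
    intro α
    conv_lhs => rw [hgdef]
    rw [WellFounded.fix_eq]
  have hg : ∀ α, α < omega1 → (g α).1 ∈ t ∧ (g α).1 ∈ U (g α).2 ∧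
      ∀ β, β < α → (g α).1 ∉ U (g β).2 := by
    intro α hα
    have h2 := hgeq α
    rw [dif_pos hα] at h2
    have h3 := (hex α hα (fun β _ => g β)).choose_spec
    rw [← h2] at h3
    exact ⟨h3.1, h3.2.1, fun β hβ => h3.2.2 β hβ⟩
  -- extract basic neighborhoods as finite parameter sets
  have hbase : ∀ α : Ordinal.{0}, ∃ Fs : Finset Ordinal, α < omega1 →
      ((Fs : Set Ordinal) ⊆ X ∧
       {x : X | ∀ ξ ∈ Fs, ((x : Ordinal) ∈ Wset c ξ ↔ (((g α).1 : Ordinal)) ∈ Wset c ξ)}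
         ⊆ U (g α).2) := by
    intro α
    by_cases hα : α < omega1
    swap
    · exact ⟨∅, fun h => absurd h hα⟩
    obtain ⟨hgt, hgU, -⟩ := hg α hα
    obtain ⟨v, hvB, hxv, hvU⟩ := hbasis.exists_subset_of_mem_open hgU (hUo _)
    obtain ⟨fs, ⟨hfsfin, hfsSB⟩, rfl⟩ := hvB
    set ξf : Set X → Ordinal := fun s =>
      if h : ∃ ξ, ξ ∈ X ∧ (s = {x : X | x.val ∈ Wset c ξ} ∨ s = {x : X | x.val ∉ Wset c ξ})
      then h.choose else 0 with hξfdef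
    have hξf : ∀ s ∈ fs, ξf s ∈ X ∧
        (s = {x : X | x.val ∈ Wset c (ξf s)} ∨ s = {x : X | x.val ∉ Wset c (ξf s)}) := by
      intro s hs
      have hex2 : ∃ ξ, ξ ∈ X ∧
          (s = {x : X | x.val ∈ Wset c ξ} ∨ s = {x : X | x.val ∉ Wset c ξ}) := by
        rcases hfsSB hs with ⟨ξ, hξ, h⟩ | ⟨ξ, hξ, h⟩
        · exact ⟨ξ, hξ, Or.inl h⟩
        · exact ⟨ξ, hξ, Or.inr h⟩
      rw [hξfdef]
      simp only [dif_pos hex2]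
      exact ⟨hex2.choose_spec.1, hex2.choose_spec.2⟩
    refine ⟨(hfsfin.toFinset).image ξf, fun _ => ⟨?_, ?_⟩⟩
    · intro ζ hζ
      simp only [Finset.coe_image, Set.mem_image, Finset.mem_coe,
        Set.Finite.mem_toFinset] at hζ
      obtain ⟨s, hs, rfl⟩ := hζ
      exact (hξf s hs).1
    · intro x hx
      apply hvU
      rw [Set.mem_sInter]
      intro s hs
      have h2 := hξf s hs
      have hagree : (x : Ordinal) ∈ Wset c (ξf s) ↔
          (((g α).1 : Ordinal)) ∈ Wset c (ξf s) :=
        hx (ξf s) (Finset.mem_image_of_mem ξf (hfsfin.mem_toFinset.mpr hs))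
      have hys : (g α).1 ∈ s := (Set.mem_sInter.mp hxv) s hs
      rcases h2.2 with hforma | hforma
      · rw [hforma] at hys ⊢
        simp only [mem_setOf_eq] at hys ⊢
        exact hagree.mpr hys
      · rw [hforma] at hys ⊢
        simp only [mem_setOf_eq] at hys ⊢
        exact fun hmem => hys (hagree.mp hmem)
  choose Fs hFs using hbase
  -- apply the combinatorial core
  obtain ⟨β, γ, hlt, hγω, hagree⟩ := core c hc X hX
    (fun α => ((g α).1 : Ordinal)) Fs
    (fun α _ => ((g α).1).2)
    (by
      intro α hα β hβ hne hEq
      have hSub : (g α).1 = (g β).1 := Subtype.ext hEq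
      rcases hne.lt_or_gt with h | h
      · exact (hg β hβ).2.2 α h (hSub ▸ (hg α hα).2.1)
      · exact (hg α hα).2.2 β h (hSub ▸ (hg β hβ).2.1)
    )
    (fun α hα => (hFs α hα).1)
  have hβω : β < omega1 := lt_trans hlt hγω
  have hmem : (g γ).1 ∈ U (g β).2 := by
    apply (hFs β hβω).2
    intro ξ hξ
    exact hagree ξ hξ
  exact (hg γ hγω).2.2 β hlt hmem
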